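/- ∫_{ℝ³} ((k²+1)/√((k²+1)²−1) − 1) dk/(8π³) = 1/(3π²√2), where k² = |k|². -/

import Mathlib

/-!
In polar coordinates the integral is `4π ∫₀^∞ φ(r) dr / (8π³)`, where
`φ(r) = r²((r² + 1)/(r √(r² + 2)) - 1)`. This has the explicit primitive
`F(r) = ((r² - 1) √(r² + 2) - r³) / 3`, with `F(0) = -√2/3` and `F(r) = O(1/r)` at infinity,
so the radial integral is `√2/3`; as `φ ≥ 0` and `F` has a limit, `φ` is automatically
integrable.
-/

open MeasureTheory Real Set Filter Module Topology

theorem integral_fun_norm_of_finrank_eq_three {E F : Type*} [NormedAddCommGroup E]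
    [InnerProductSpace ℝ E] [FiniteDimensional ℝ E] [MeasurableSpace E] [BorelSpace E]
    [NormedAddCommGroup F] [NormedSpace ℝ F] (hE : finrank ℝ E = 3) (f : ℝ → F) :
    ∫ x : E, f ‖x‖ = (4 * π) • ∫ r in Ioi (0 : ℝ), r ^ 2 • f r := by
  have : Nontrivial E := nontrivial_of_finrank_eq_succ hE
  have hball : volume.real (Metric.ball (0 : E) 1) = 4 * π / 3 := by
    rw [measureReal_def, InnerProductSpace.volume_ball_of_dim_odd (k := 1) hE, hE,
      ENNReal.ofReal_one, one_pow, one_mul, ENNReal.toReal_ofReal (by positivity)]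
    norm_num [Nat.doubleFactorial]
    ring
  rw [integral_fun_norm_addHaar, hE, hball, ← Nat.cast_smul_eq_nsmul ℝ, smul_smul]
  norm_num [mul_div_cancel₀]

noncomputable def radialIntegrand (r : ℝ) : ℝ := r * (r ^ 2 + 1) / √(r ^ 2 + 2) - r ^ 2

noncomputable def radialPrimitive (r : ℝ) : ℝ := ((r ^ 2 - 1) * √(r ^ 2 + 2) - r ^ 3) / 3

lemma sq_sqrt_sq_add_two (r : ℝ) : √(r ^ 2 + 2) ^ 2 = r ^ 2 + 2 := sq_sqrt (by positivity)

lemma sq_mul_eq_radialIntegrand {r : ℝ} (hr : 0 < r) :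
    r ^ 2 * ((r ^ 2 + 1) / √((r ^ 2 + 1) ^ 2 - 1) - 1) = radialIntegrand r := by
  have hs : 0 < √(r ^ 2 + 2) := sqrt_pos.2 (by positivity)
  rw [show (r ^ 2 + 1) ^ 2 - 1 = r ^ 2 * (r ^ 2 + 2) by ring, sqrt_mul (sq_nonneg r),
    sqrt_sq hr.le, radialIntegrand]
  field_simp

lemma hasDerivAt_radialPrimitive (r : ℝ) : HasDerivAt radialPrimitive (radialIntegrand r) r := by
  have hs : 0 < √(r ^ 2 + 2) := sqrt_pos.2 (by positivity)
  have hsqrt : HasDerivAt (fun x : ℝ ↦ √(x ^ 2 + 2)) (r / √(r ^ 2 + 2)) r :=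
    (((hasDerivAt_pow 2 r).add_const 2).sqrt (by positivity)).congr_deriv (by norm_num; field_simp)
  refine ((((hasDerivAt_pow 2 r).sub_const 1).mul hsqrt).sub (hasDerivAt_pow 3 r)).div_const 3
    |>.congr_deriv ?_
  unfold radialIntegrand
  field_simp
  linear_combination 2 * r * sq_sqrt_sq_add_two r

lemma radialIntegrand_nonneg {r : ℝ} (hr : 0 ≤ r) : 0 ≤ radialIntegrand r := by
  have hs : 0 < √(r ^ 2 + 2) := sqrt_pos.2 (by positivity)
  have hsq := sq_sqrt_sq_add_two r
  have hle : r * √(r ^ 2 + 2) ≤ r ^ 2 + 1 := by nlinarith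
  unfold radialIntegrand
  rw [sub_nonneg, le_div_iff₀ hs]
  nlinarith

lemma abs_radialPrimitive_le {r : ℝ} (hr : 1 ≤ r) : |radialPrimitive r| ≤ r⁻¹ := by
  have hs : r ≤ √(r ^ 2 + 2) := le_sqrt_of_sq_le (by linarith)
  have hsq := sq_sqrt_sq_add_two r
  have hden : 3 * r ^ 3 ≤ 3 * ((r ^ 2 - 1) * √(r ^ 2 + 2) + r ^ 3) := by
    have : 0 ≤ r ^ 2 - 1 := by nlinarith
    nlinarith [mul_nonneg this (sub_nonneg.2 hs)]
  have hpos : 0 < 3 * ((r ^ 2 - 1) * √(r ^ 2 + 2) + r ^ 3) := lt_of_lt_of_le (by positivity) hden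
  -- rationalize: `(r² - 1)²(r² + 2) - r⁶ = 2 - 3r²`
  have hrat : radialPrimitive r = (2 - 3 * r ^ 2) / (3 * ((r ^ 2 - 1) * √(r ^ 2 + 2) + r ^ 3)) := by
    rw [radialPrimitive, eq_div_iff hpos.ne']
    linear_combination (r ^ 2 - 1) ^ 2 * hsq
  calc |radialPrimitive r| ≤ 3 * r ^ 2 / (3 * r ^ 3) := by
        rw [hrat, abs_div, abs_of_pos hpos]
        gcongr
        rw [abs_le]
        constructor <;> nlinarith
    _ = r⁻¹ := by field_simp

lemma tendsto_radialPrimitive_atTop : Tendsto radialPrimitive atTop (𝓝 0) :=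
  squeeze_zero_norm' ((eventually_ge_atTop 1).mono fun _ ↦ abs_radialPrimitive_le)
    tendsto_inv_atTop_zero

lemma integral_radialIntegrand_Ioi : ∫ r in Ioi (0 : ℝ), radialIntegrand r = √2 / 3 := by
  rw [integral_Ioi_of_hasDerivAt_of_nonneg
    (hasDerivAt_radialPrimitive 0).continuousAt.continuousWithinAt
    (fun r _ ↦ hasDerivAt_radialPrimitive r) (fun r hr ↦ radialIntegrand_nonneg hr.le)
    tendsto_radialPrimitive_atTop]
  norm_num [radialPrimitive, neg_div]

theorem stmt_8 :
    ∫ k : EuclideanSpace ℝ (Fin 3),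
        ((‖k‖ ^ 2 + 1) / Real.sqrt ((‖k‖ ^ 2 + 1) ^ 2 - 1) - 1) / (8 * π ^ 3)
      = 1 / (3 * π ^ 2 * Real.sqrt 2) := by
  have hradial : ∫ r in Ioi (0 : ℝ), r ^ 2 • ((r ^ 2 + 1) / √((r ^ 2 + 1) ^ 2 - 1) - 1)
      = √2 / 3 := by
    rw [← integral_radialIntegrand_Ioi]
    exact setIntegral_congr_fun measurableSet_Ioi fun r hr ↦ sq_mul_eq_radialIntegrand hr
  rw [integral_div, integral_fun_norm_of_finrank_eq_three (by simp)
    (fun r ↦ (r ^ 2 + 1) / √((r ^ 2 + 1) ^ 2 - 1) - 1), hradial, smul_eq_mul]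
  have h2 : √2 ^ 2 = 2 := sq_sqrt zero_le_two
  field_simp
  linear_combination 4 * h2
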